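/- For every n ∈ ℤ the isomorphism β^n(−) is natural: for every morphism f : B → C in C, the square with horizontal maps β^n(B) : Êxt_C^n(A,B) → BC_C^n(A,B) and β^n(C), and vertical maps Êxt_C^n(A,f) and BC_C^n(A,f), commutes. -/

import Mathlib

open CategoryTheory Category Limits ZeroObject

universe v u

namespace Mislin

variable {C : Type u} [Category.{v} C] [Abelian C]

/-- The subgroup `P_C(A,B) ⊆ Hom_C(A,B)` of morphisms factoring through a projective
object. -/
def pSub (A B : C) : AddSubgroup (A ⟶ B) where
  carrier := {f | ∃ P : C, Projective P ∧ ∃ (u : A ⟶ P) (v : P ⟶ B), f = u ≫ v}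
  zero_mem' := ⟨0, inferInstance, 0, 0, by simp⟩
  add_mem' := by
    rintro f g ⟨P, hP, u, v, rfl⟩ ⟨Q, hQ, u', v', rfl⟩
    exact ⟨P ⊞ Q, by haveI := hP; haveI := hQ; infer_instance,
      biprod.lift u u', biprod.desc v v', by simp⟩
  neg_mem' := by
    rintro f ⟨P, hP, u, v, rfl⟩
    exact ⟨P, hP, -u, v, by simp⟩

/-- The stable Hom-group `[A,B]_C := Hom_C(A,B)/P_C(A,B)`. -/
def stHom (A B : C) : Type v := (A ⟶ B) ⧸ pSub A B

noncomputable instance (A B : C) : AddCommGroup (stHom A B) := by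
  unfold stHom; infer_instance

/-- The class of a morphism in the stable Hom-group. -/
def stMk {A B : C} (f : A ⟶ B) : stHom A B := QuotientAddGroup.mk f

/-- Postcomposition with `g : B ⟶ C'` descends to stable Hom-groups. -/
noncomputable def stPost {A B C' : C} (g : B ⟶ C') : stHom A B →+ stHom A C' :=
  QuotientAddGroup.map (pSub A B) (pSub A C')
    (AddMonoidHom.mk' (fun f => f ≫ g) fun f f' => by simp [Preadditive.add_comp])
    (by
      rintro f ⟨P, hP, u, v, rfl⟩
      exact ⟨P, hP, u, v ≫ g, by simp⟩)

/-- Precomposition with `e : A' ⟶ A` descends to stable Hom-groups. -/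
noncomputable def stPre {A' A B : C} (e : A' ⟶ A) : stHom A B →+ stHom A' B :=
  QuotientAddGroup.map (pSub A B) (pSub A' B)
    (AddMonoidHom.mk' (fun f => e ≫ f) fun f f' => by simp [Preadditive.comp_add])
    (by
      rintro f ⟨P, hP, u, v, rfl⟩
      exact ⟨P, hP, e ≫ u, v, by simp⟩)

/-- The composition `[B,C']_C × [A,B]_C → [A,C']_C` descended from composition in `C`. -/
noncomputable def stComp {A B C' : C} (y : stHom B C') (x : stHom A B) : stHom A C' :=
  Quotient.liftOn' y (fun g => stPost g x) (by
    intro g g' hgg'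
    rw [QuotientAddGroup.leftRel_apply] at hgg'
    obtain ⟨f, rfl⟩ := QuotientAddGroup.mk'_surjective (pSub A B) x
    show stPost g _ = stPost g' _
    have : stPost g (QuotientAddGroup.mk' (pSub A B) f)
        = QuotientAddGroup.mk (f ≫ g) := rfl
    rw [this]
    have : stPost g' (QuotientAddGroup.mk' (pSub A B) f)
        = QuotientAddGroup.mk (f ≫ g') := rfl
    rw [this]
    refine QuotientAddGroup.eq.mpr ?_
    obtain ⟨P, hP, u, v, huv⟩ := hgg'
    exact ⟨P, hP, f ≫ u, v, by
      rw [Category.assoc, ← huv]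
      simp [Preadditive.comp_add, Preadditive.comp_neg]⟩)

@[simp]
theorem stComp_mk {A B C' : C} (g : B ⟶ C') (f : A ⟶ B) :
    stComp (stMk g) (stMk f) = stMk (f ≫ g) := rfl

/-- A chosen short exact sequence `0 → M̃₁ → M₀ → M → 0` with `M₀` projective. -/
structure ProjPresentation (M : C) where
  syz : C
  P : C
  projP : Projective P
  ι : syz ⟶ P
  π : P ⟶ M
  w : ι ≫ π = 0
  shortExact : (ShortComplex.mk ι π w).ShortExact

/-- The defining property of the homomorphism `t_{A,B} : [A,B]_C → [Ã₁,B̃₁]_C`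
(Proposition 5.2): it sends the class of `f` to the class of any `f₁` arising from a lift
`f₀` of `f` to the chosen projective presentations. -/
def TChar {M N : C} (pM : ProjPresentation M) (pN : ProjPresentation N)
    (t : stHom M N → stHom pM.syz pN.syz) : Prop :=
  ∀ (f : M ⟶ N) (f₀ : pM.P ⟶ pN.P) (f₁ : pM.syz ⟶ pN.syz),
    pM.π ≫ f = f₀ ≫ pN.π → pM.ι ≫ f₀ = f₁ ≫ pN.ι →
    t (stMk f) = stMk f₁

/-- A projective resolution of `M` presented through its syzygies: short exact sequences
`0 → M̃_{k+1} → P_k → M̃_k → 0` with `P_k` projective and `M̃_0 = M`. -/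
structure SyzygySequence (M : C) where
  Mt : ℕ → C
  Mt_zero : Mt 0 = M
  P : ℕ → C
  projP : ∀ k, Projective (P k)
  ι : ∀ k, Mt (k + 1) ⟶ P k
  π : ∀ k, P k ⟶ Mt k
  w : ∀ k, ι k ≫ π k = 0
  shortExact : ∀ k, (ShortComplex.mk (ι k) (π k) (w k)).ShortExact

/-- The projective presentation `0 → M̃_{k+1} → P_k → M̃_k → 0` of the `k`-th syzygy. -/
def SyzygySequence.pres {M : C} (R : SyzygySequence M) (k : ℕ) :
    ProjPresentation (R.Mt k) :=
  ⟨R.Mt (k + 1), R.P k, R.projP k, R.ι k, R.π k, R.w k, R.shortExact k⟩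

variable (C)

/-- A cohomological functor `(T^•, δ^•) : C → Ab` (Axioms 2.1–2.2 of the paper). -/
structure CohomFunctor where
  T : ℤ → C ⥤ AddCommGrpCat.{v}
  additive : ∀ n, (T n).Additive
  δ : ∀ {X : ShortComplex C}, X.ShortExact → ∀ n : ℤ, (T n).obj X.X₃ ⟶ (T (n + 1)).obj X.X₁
  δ_natural : ∀ {X Y : ShortComplex C} (hX : X.ShortExact) (hY : Y.ShortExact)
    (φ : X ⟶ Y) (n : ℤ),
    (T n).map φ.τ₃ ≫ δ hY n = δ hX n ≫ (T (n + 1)).map φ.τ₁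
  zero₁ : ∀ {X : ShortComplex C}, X.ShortExact → ∀ n : ℤ,
    (T n).map X.f ≫ (T n).map X.g = 0
  zero₂ : ∀ {X : ShortComplex C} (hX : X.ShortExact) (n : ℤ),
    (T n).map X.g ≫ δ hX n = 0
  zero₃ : ∀ {X : ShortComplex C} (hX : X.ShortExact) (n : ℤ),
    δ hX n ≫ (T (n + 1)).map X.f = 0
  exact₁ : ∀ {X : ShortComplex C} (hX : X.ShortExact) (n : ℤ),
    (ShortComplex.mk ((T n).map X.f) ((T n).map X.g) (zero₁ hX n)).Exact
  exact₂ : ∀ {X : ShortComplex C} (hX : X.ShortExact) (n : ℤ),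
    (ShortComplex.mk ((T n).map X.g) (δ hX n) (zero₂ hX n)).Exact
  exact₃ : ∀ {X : ShortComplex C} (hX : X.ShortExact) (n : ℤ),
    (ShortComplex.mk (δ hX n) ((T (n + 1)).map X.f) (zero₃ hX n)).Exact

/-- An axiomatisation of the Ext bifunctor of `C`: for each object `A`, a cohomological
functor `Ext^•(A,−) : C → Ab` (extended by `0` in negative degrees), contravariantly
functorial in `A`, with connecting homomorphisms and long exact sequences in both variables,
with `Ext^0(A,B) ≅ Hom_C(A,B)`, and with `Ext^n(P,−) = 0` for `P` projective and `n ≥ 1`. -/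
structure ExtFamily where
  Efun : C → CohomFunctor C
  map₁ : ∀ {A A' : C} (f : A ⟶ A') (n : ℤ) (B : C),
    ((Efun A').T n).obj B ⟶ ((Efun A).T n).obj B
  map₁_id : ∀ (A : C) (n : ℤ) (B : C), map₁ (𝟙 A) n B = 𝟙 _
  map₁_comp : ∀ {A A' A'' : C} (f : A ⟶ A') (g : A' ⟶ A'') (n : ℤ) (B : C),
    map₁ (f ≫ g) n B = map₁ g n B ≫ map₁ f n B
  map₁_natural : ∀ {A A' : C} (f : A ⟶ A') (n : ℤ) {B B' : C} (g : B ⟶ B'),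
    map₁ f n B ≫ ((Efun A).T n).map g = ((Efun A').T n).map g ≫ map₁ f n B'
  map₁_δ : ∀ {A A' : C} (f : A ⟶ A') {X : ShortComplex C} (hX : X.ShortExact) (n : ℤ),
    map₁ f n X.X₃ ≫ (Efun A).δ hX n = (Efun A').δ hX n ≫ map₁ f (n + 1) X.X₁
  δ₁ : ∀ {Y : ShortComplex C}, Y.ShortExact → ∀ (n : ℤ) (B : C),
    ((Efun Y.X₁).T n).obj B ⟶ ((Efun Y.X₃).T (n + 1)).obj B
  w₁a : ∀ {Y : ShortComplex C}, Y.ShortExact → ∀ (n : ℤ) (B : C),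
    map₁ Y.g n B ≫ map₁ Y.f n B = 0
  w₁b : ∀ {Y : ShortComplex C} (hY : Y.ShortExact) (n : ℤ) (B : C),
    map₁ Y.f n B ≫ δ₁ hY n B = 0
  w₁c : ∀ {Y : ShortComplex C} (hY : Y.ShortExact) (n : ℤ) (B : C),
    δ₁ hY n B ≫ map₁ Y.g (n + 1) B = 0
  ex₁a : ∀ {Y : ShortComplex C} (hY : Y.ShortExact) (n : ℤ) (B : C),
    (ShortComplex.mk (map₁ Y.g n B) (map₁ Y.f n B) (w₁a hY n B)).Exact
  ex₁b : ∀ {Y : ShortComplex C} (hY : Y.ShortExact) (n : ℤ) (B : C),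
    (ShortComplex.mk (map₁ Y.f n B) (δ₁ hY n B) (w₁b hY n B)).Exact
  ex₁c : ∀ {Y : ShortComplex C} (hY : Y.ShortExact) (n : ℤ) (B : C),
    (ShortComplex.mk (δ₁ hY n B) (map₁ Y.g (n + 1) B) (w₁c hY n B)).Exact
  equiv0 : ∀ A B : C, ((Efun A).T 0).obj B ≃+ (A ⟶ B)
  equiv0_natural₂ : ∀ (A : C) {B B' : C} (g : B ⟶ B') (x : ((Efun A).T 0).obj B),
    equiv0 A B' (((Efun A).T 0).map g x) = equiv0 A B x ≫ g
  equiv0_natural₁ : ∀ {A A' : C} (f : A ⟶ A') (B : C) (x : ((Efun A').T 0).obj B),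
    equiv0 A B (map₁ f 0 B x) = f ≫ equiv0 A' B x
  neg_vanish : ∀ (n : ℤ), n < 0 → ∀ A B : C, IsZero (((Efun A).T n).obj B)
  proj_vanish : ∀ (n : ℤ), 1 ≤ n → ∀ P : C, Projective P → ∀ B : C,
    IsZero (((Efun P).T n).obj B)

variable {C}

/-- Iterated transition morphisms of an `ℕ`-indexed direct system of abelian groups. -/
def iterTrans {X : ℕ → AddCommGrpCat.{v}} (f : ∀ k, X k ⟶ X (k + 1)) (k : ℕ) :
    ∀ m, X k ⟶ X (k + m)
  | 0 => 𝟙 _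
  | m + 1 => iterTrans f k m ≫ f (k + m)

/-- The concrete characterisation of a direct limit of an `ℕ`-indexed direct system of
abelian groups. -/
structure IsAbDirectLimit {X : ℕ → AddCommGrpCat.{v}} (f : ∀ k, X k ⟶ X (k + 1))
    (L : AddCommGrpCat.{v}) (ι : ∀ k, X k ⟶ L) : Prop where
  comm : ∀ (k : ℕ) (x : X k), ι (k + 1) (f k x) = ι k x
  jointly_surj : ∀ y : L, ∃ (k : ℕ) (x : X k), ι k x = y
  eventually_zero : ∀ (k : ℕ) (x : X k), ι k x = 0 → ∃ m, iterTrans f k m x = 0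

/-- The `j`-th term `Ext^{m₀+j}(A, B̃_{k₀+j})` of the direct system defining
`Êxt^n(A,B)` via the resolution construction (reindexed so that all degrees are
nonnegative: `(m₀ : ℤ) = n + k₀`). -/
def extObj (EF : ExtFamily C) (A : C) {B : C} (RB : SyzygySequence B)
    (m₀ k₀ j : ℕ) : AddCommGrpCat.{v} :=
  ((EF.Efun A).T ((m₀ + j : ℕ) : ℤ)).obj (RB.Mt (k₀ + j))

/-- The transition map `δ^{m₀+j} : Ext^{m₀+j}(A, B̃_{k₀+j}) ⟶ Ext^{m₀+j+1}(A, B̃_{k₀+j+1})`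
of the system defining `Êxt^n(A,B)`. -/
def extMap (EF : ExtFamily C) (A : C) {B : C} (RB : SyzygySequence B)
    (m₀ k₀ j : ℕ) : extObj EF A RB m₀ k₀ j ⟶ extObj EF A RB m₀ k₀ (j + 1) :=
  (EF.Efun A).δ (RB.shortExact (k₀ + j)) ((m₀ + j : ℕ) : ℤ) ≫
    eqToHom (congrArg (fun i : ℤ => ((EF.Efun A).T i).obj (RB.Mt (k₀ + j + 1)))
      (show ((m₀ + j : ℕ) : ℤ) + 1 = ((m₀ + j + 1 : ℕ) : ℤ) by push_cast; ring))

/-- The `j`-th term `[Ã_{m₀+j}, B̃_{k₀+j}]_C` of the direct system of the naïve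
(Benson–Carlson) construction. -/
noncomputable def bcObj {A B : C} (RA : SyzygySequence A) (RB : SyzygySequence B)
    (m₀ k₀ j : ℕ) : AddCommGrpCat.{v} :=
  AddCommGrpCat.of (stHom (RA.Mt (m₀ + j)) (RB.Mt (k₀ + j)))


/-- A lift of a morphism `f : M ⟶ N` to the syzygies of chosen projective resolutions
(Definition 4.3). -/
structure SyzygyLift {M N : C} (f : M ⟶ N) (RM : SyzygySequence M)
    (RN : SyzygySequence N) where
  ft : ∀ k, RM.Mt k ⟶ RN.Mt k
  fP : ∀ k, RM.P k ⟶ RN.P k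
  ft_zero : ft 0 = eqToHom RM.Mt_zero ≫ f ≫ eqToHom RN.Mt_zero.symm
  comm_ι : ∀ k, RM.ι k ≫ fP k = ft (k + 1) ≫ RN.ι k
  comm_π : ∀ k, RM.π k ≫ ft k = fP k ≫ RN.π k

/-- Lemma 5.8. The isomorphisms `β^n(−)` are natural: for every morphism
`f : B ⟶ B''` in `C` the square with horizontal maps `β^n(B)`, `β^n(B'')` and vertical maps
`Êxt^n(A,f)` (induced on the direct limit by `Ext^{n+k}(A, f̃_k)`) and `BC^n(A,f)` (induced
on the direct limit by postcomposition with the classes of the syzygy lifts `f̃_k`)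
commutes. -/
theorem beta_natural
    {C : Type u} [Category.{v} C] [Abelian C] [EnoughProjectives C]
    (EF : ExtFamily C) (A B B'' : C) (f : B ⟶ B'')
    (RA : SyzygySequence A) (RB : SyzygySequence B) (RB'' : SyzygySequence B'')
    (F : SyzygyLift f RB RB'')
    -- the family `β` together with its defining properties (cf. Lemma 5.6):
    (β : ∀ (m : ℕ), 0 < m → ∀ B' : C,
      ((EF.Efun A).T (m : ℤ)).obj B' ⟶ AddCommGrpCat.of (stHom (RA.Mt m) B'))
    (hβnat : ∀ (m : ℕ) (hm : 0 < m) {B₁ B₂ : C} (g : B₁ ⟶ B₂)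
        (x : ((EF.Efun A).T (m : ℤ)).obj B₁),
      β m hm B₂ (((EF.Efun A).T (m : ℤ)).map g x) = stPost g (β m hm B₁ x))
    (hβsurj : ∀ (m : ℕ) (hm : 0 < m) (B' : C), Function.Surjective (β m hm B'))
    -- the data of the four direct limits and the induced morphisms:
    (n : ℤ) (m₀ k₀ : ℕ) (hm₀ : 1 ≤ m₀) (hnk : (m₀ : ℤ) = n + (k₀ : ℤ))
    (LEB : AddCommGrpCat.{v}) (ιEB : ∀ j, extObj EF A RB m₀ k₀ j ⟶ LEB)
    (hLEB : IsAbDirectLimit (extMap EF A RB m₀ k₀) LEB ιEB)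
    (LEC : AddCommGrpCat.{v}) (ιEC : ∀ j, extObj EF A RB'' m₀ k₀ j ⟶ LEC)
    (hLEC : IsAbDirectLimit (extMap EF A RB'' m₀ k₀) LEC ιEC)
    (tfamB : ∀ j, bcObj RA RB m₀ k₀ j ⟶ bcObj RA RB m₀ k₀ (j + 1))
    (htfamB : ∀ j, TChar (RA.pres (m₀ + j)) (RB.pres (k₀ + j)) (fun y => tfamB j y))
    (LBB : AddCommGrpCat.{v}) (ιBB : ∀ j, bcObj RA RB m₀ k₀ j ⟶ LBB)
    (hLBB : IsAbDirectLimit tfamB LBB ιBB)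
    (tfamC : ∀ j, bcObj RA RB'' m₀ k₀ j ⟶ bcObj RA RB'' m₀ k₀ (j + 1))
    (htfamC : ∀ j, TChar (RA.pres (m₀ + j)) (RB''.pres (k₀ + j)) (fun y => tfamC j y))
    (LBC : AddCommGrpCat.{v}) (ιBC : ∀ j, bcObj RA RB'' m₀ k₀ j ⟶ LBC)
    (hLBC : IsAbDirectLimit tfamC LBC ιBC)
    -- `Êxt^n(A,f)`:
    (uE : LEB ⟶ LEC)
    (huE : ∀ (j : ℕ) (x : extObj EF A RB m₀ k₀ j),
      uE (ιEB j x) = ιEC j (((EF.Efun A).T ((m₀ + j : ℕ) : ℤ)).map (F.ft (k₀ + j)) x))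
    -- `BC^n(A,f)`:
    (uB : LBB ⟶ LBC)
    (huB : ∀ (j : ℕ) (y : bcObj RA RB m₀ k₀ j),
      uB (ιBB j y) = ιBC j (stPost (F.ft (k₀ + j)) y))
    -- `β^n(B)` and `β^n(B'')`:
    (eB : LEB ⟶ LBB)
    (heB : ∀ (j : ℕ) (x : extObj EF A RB m₀ k₀ j),
      eB (ιEB j x) = ιBB j (β (m₀ + j) (by omega) (RB.Mt (k₀ + j)) x))
    (eC : LEC ⟶ LBC)
    (heC : ∀ (j : ℕ) (x : extObj EF A RB'' m₀ k₀ j),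
      eC (ιEC j x) = ιBC j (β (m₀ + j) (by omega) (RB''.Mt (k₀ + j)) x)) :
    uE ≫ eC = eB ≫ uB := by
  ext y
  obtain ⟨j, x, rfl⟩ := hLEB.jointly_surj y
  show eC (uE (ιEB j x)) = uB (eB (ιEB j x))
  erw [huE, heC, heB, huB, hβnat]

end Mislin
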